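/- arXiv:2107.08360 — 2 statements merged into one kernel-verified Lean document; each statement's English description precedes it below -/
import Mathlib

section
/- Nonsmooth barrier comparison lemma: let h : [0,T] → ℝ be absolutely continuous and α : ℝ → ℝ a locally Lipschitz, strictly increasing function with α(0) = 0. If h(0) > 0 and h'(t) ≥ -α(h(t)) for almost all t ∈ [0,T] (where h' exists almost everywhere), then h(t) > 0 for all t ∈ [0,T]. -/
open MeasureTheory intervalIntegral

/-- A locally Lipschitz monotone function vanishing at `0` admits a linear
bound `α z ≤ K * z` on `[0, M]`. Only local Lipschitzness at `0` is used. -/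
lemma linear_bound_aux (α : ℝ → ℝ) (hαlip : LocallyLipschitz α)
    (hαmono : StrictMono α) (hα0 : α 0 = 0) (M : ℝ) :
    ∃ K : ℝ, 1 ≤ K ∧ ∀ z ∈ Set.Icc (0:ℝ) M, α z ≤ K * z := by
  obtain ⟨K₀, U, hU, hlip⟩ := hαlip 0
  obtain ⟨δ, hδpos, hball⟩ := Metric.mem_nhds_iff.mp hU
  set δ' : ℝ := δ / 2 with hδ'
  have hδ'pos : 0 < δ' := by positivity
  refine ⟨max (K₀ : ℝ) (max 1 (α M / δ')), le_trans (le_max_left _ _) (le_max_right _ _), ?_⟩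
  rintro z ⟨hz0, hzM⟩
  rcases le_or_gt z δ' with hzd | hzd
  · have hzU : z ∈ U := hball (by
      simp only [Metric.mem_ball, Real.dist_eq, sub_zero]
      rw [abs_of_nonneg hz0]
      linarith)
    have h0U : (0:ℝ) ∈ U := hball (by simpa using hδpos)
    have := hlip.dist_le_mul z hzU 0 h0U
    rw [Real.dist_eq, Real.dist_eq, hα0, sub_zero, sub_zero, abs_of_nonneg hz0] at this
    calc α z ≤ |α z| := le_abs_self _
      _ ≤ (K₀ : ℝ) * z := this
      _ ≤ max (K₀ : ℝ) (max 1 (α M / δ')) * z :=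
        mul_le_mul_of_nonneg_right (le_max_left _ _) hz0
  · have hMnn : 0 ≤ α M := by
      rw [← hα0]; exact hαmono.monotone (le_trans hz0 hzM)
    have h1 : α z ≤ α M := hαmono.monotone hzM
    have h2 : α M = (α M / δ') * δ' := by field_simp
    have h3 : (α M / δ') * δ' ≤ (α M / δ') * z :=
      mul_le_mul_of_nonneg_left hzd.le (by positivity)
    have h4 : (α M / δ') * z ≤ max (K₀ : ℝ) (max 1 (α M / δ')) * z :=
      mul_le_mul_of_nonneg_right
        (le_trans (le_max_right _ _) (le_max_right _ _)) hz0
    linarith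

/-- nonsmooth barrier comparison lemma. An absolutely continuous
function (encoded by its a.e. derivative and the fundamental theorem of
calculus) satisfying h' ≥ -α(h) a.e. with h(0) > 0 stays positive. -/
theorem stmt_9 (T : ℝ) (hT : 0 ≤ T) (h h' : ℝ → ℝ) (α : ℝ → ℝ)
    (hint : IntervalIntegrable h' volume 0 T)
    (hftc : ∀ t ∈ Set.Icc 0 T, h t = h 0 + ∫ s in (0:ℝ)..t, h' s)
    (hαlip : LocallyLipschitz α) (hαmono : StrictMono α) (hα0 : α 0 = 0)
    (h0 : 0 < h 0)
    (hineq : ∀ᵐ t, t ∈ Set.Icc 0 T → -α (h t) ≤ h' t) :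
    ∀ t ∈ Set.Icc 0 T, 0 < h t := by
  by_contra hcon
  push_neg at hcon
  obtain ⟨t₀, ht₀, ht₀le⟩ := hcon
  -- continuity of h on [0,T]
  have hIcc : Set.uIcc (0:ℝ) T = Set.Icc 0 T := Set.uIcc_of_le hT
  have hcont : ContinuousOn h (Set.Icc 0 T) := by
    have hprim : ContinuousOn (fun t => h 0 + ∫ s in (0:ℝ)..t, h' s) (Set.Icc 0 T) := by
      apply continuousOn_const.add
      have := intervalIntegral.continuousOn_primitive_interval
        (f := h') (μ := volume) (a := 0) (b := T) (by rw [hIcc]; exact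
          (intervalIntegrable_iff_integrableOn_Icc_of_le hT).mp hint)
      rwa [hIcc] at this
    exact hprim.congr hftc
  -- maximum of h on [0,T]
  obtain ⟨m, hmmem, hmax⟩ := isCompact_Icc.exists_isMaxOn (f := h)
    ⟨0, Set.left_mem_Icc.mpr hT⟩ hcont
  set M : ℝ := h m with hM
  have hMax : ∀ t ∈ Set.Icc 0 T, h t ≤ M := fun t ht => hmax ht
  -- linear bound on α
  obtain ⟨K, hK1, hKbound⟩ := linear_bound_aux α hαlip hαmono hα0 M
  have hKpos : 0 < K := lt_of_lt_of_le one_pos hK1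
  -- the first zero of h
  set B : Set ℝ := {t ∈ Set.Icc 0 T | h t ≤ 0} with hB
  have hBne : B.Nonempty := ⟨t₀, ht₀, ht₀le⟩
  have hBclosed : IsClosed B :=
    hcont.preimage_isClosed_of_isClosed isClosed_Icc isClosed_Iic
  have hBbdd : BddBelow B := ⟨0, fun x hx => hx.1.1⟩
  set c : ℝ := sInf B with hc
  have hcB : c ∈ B := hBclosed.csInf_mem hBne hBbdd
  have hcmem : c ∈ Set.Icc 0 T := hcB.1
  have hcle : h c ≤ 0 := hcB.2
  have hlt : ∀ t ∈ Set.Icc 0 T, t < c → 0 < h t := by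
    intro t ht htc
    by_contra hle
    push_neg at hle
    exact absurd (csInf_le hBbdd ⟨ht, hle⟩) (not_le.mpr htc)
  -- h c = 0
  have hc0 : h c = 0 := by
    refine le_antisymm hcle ?_
    by_contra hneg
    push_neg at hneg
    have hsub : Set.Icc (0:ℝ) c ⊆ Set.Icc 0 T :=
      Set.Icc_subset_Icc le_rfl hcmem.2
    have := intermediate_value_Icc' hcmem.1 (hcont.mono hsub)
      (Set.mem_Icc.mpr ⟨hneg.le, h0.le⟩)
    obtain ⟨t', ht', ht'0⟩ := this
    have ht'c : t' < c :=
      lt_of_le_of_ne ht'.2 (fun heq => by rw [heq] at ht'0; linarith)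
    exact absurd (csInf_le hBbdd ⟨hsub ht', ht'0.le⟩) (not_le.mpr ht'c)
  have hnonneg : ∀ t ∈ Set.Icc 0 c, 0 ≤ h t := by
    intro t ht
    rcases lt_or_eq_of_le ht.2 with htc | htc
    · exact (hlt t (Set.Icc_subset_Icc le_rfl hcmem.2 ht) htc).le
    · rw [htc, hc0]
  -- difference of h over a subinterval is the integral of h'
  have hdiff : ∀ a b : ℝ, a ∈ Set.Icc 0 T → b ∈ Set.Icc 0 T →
      h b - h a = ∫ s in a..b, h' s := by
    intro a b ha hb
    have hia : IntervalIntegrable h' volume 0 a :=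
      hint.mono_set (by rw [hIcc, Set.uIcc_of_le ha.1]; exact Set.Icc_subset_Icc le_rfl ha.2)
    have hib : IntervalIntegrable h' volume 0 b :=
      hint.mono_set (by rw [hIcc, Set.uIcc_of_le hb.1]; exact Set.Icc_subset_Icc le_rfl hb.2)
    rw [hftc a ha, hftc b hb]
    have := intervalIntegral.integral_interval_sub_left hib hia
    linarith [this]
  -- main induction
  have key : ∀ n : ℕ, ∃ a ∈ Set.Icc 0 c, h a = h 0 * (1/2)^n ∧ (n : ℝ) / (2*K) ≤ a := by
    intro n
    induction n with
    | zero => exact ⟨0, Set.left_mem_Icc.mpr hcmem.1, by simp, by simp⟩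
    | succ n ih =>
      obtain ⟨a, haIcc, hav, han⟩ := ih
      set v : ℝ := h 0 * (1/2)^n with hv
      have hvpos : 0 < v := by positivity
      have hsubT : Set.Icc 0 c ⊆ Set.Icc 0 T := Set.Icc_subset_Icc le_rfl hcmem.2
      have hcontc : ContinuousOn h (Set.Icc 0 c) := hcont.mono hsubT
      have hac : a < c := by
        rcases lt_or_eq_of_le haIcc.2 with hlt' | heq
        · exact hlt'
        · exfalso; rw [heq, hc0] at hav; linarith [hav.symm.trans_lt hvpos]
      -- a' : last time h = v
      set A : Set ℝ := {t ∈ Set.Icc a c | h t = v} with hA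
      have hAne : A.Nonempty := ⟨a, Set.mem_sep ⟨le_rfl, hac.le⟩ hav⟩
      have hAclosed : IsClosed A :=
        (hcontc.mono (Set.Icc_subset_Icc haIcc.1 le_rfl)).preimage_isClosed_of_isClosed
          isClosed_Icc isClosed_singleton
      have hAbdd : BddAbove A := ⟨c, fun x hx => hx.1.2⟩
      set a' : ℝ := sSup A with ha'
      have ha'A : a' ∈ A := hAclosed.csSup_mem hAne hAbdd
      have ha'v : h a' = v := ha'A.2
      have ha'mem : a' ∈ Set.Icc 0 c := ⟨le_trans haIcc.1 ha'A.1.1, ha'A.1.2⟩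
      have ha'c : a' < c := by
        rcases lt_or_eq_of_le ha'mem.2 with hlt' | heq
        · exact hlt'
        · exfalso; rw [heq, hc0] at ha'v; linarith
      -- after a', h stays below v
      have hbelow : ∀ t, a' < t → t ≤ c → h t < v := by
        intro t hta htc
        by_contra hge
        push_neg at hge
        have htmem : t ∈ Set.Icc 0 c := ⟨le_trans ha'mem.1 hta.le, htc⟩
        have := intermediate_value_Icc' htc
          (hcontc.mono (Set.Icc_subset_Icc htmem.1 le_rfl))
          (Set.mem_Icc.mpr ⟨hc0 ▸ hvpos.le, hge⟩)
        obtain ⟨t'', ht''mem, ht''v⟩ := this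
        have : t'' ≤ a' := le_csSup hAbdd
          ⟨⟨le_trans ha'A.1.1 (le_trans hta.le ht''mem.1), ht''mem.2⟩, ht''v⟩
        linarith [ht''mem.1]
      -- b : first time after a' with h = v/2
      set B' : Set ℝ := {t ∈ Set.Icc a' c | h t = v/2} with hB'
      have hB'ne : B'.Nonempty := by
        have := intermediate_value_Icc' ha'c.le
          (hcontc.mono (Set.Icc_subset_Icc ha'mem.1 le_rfl))
          (Set.mem_Icc.mpr ⟨hc0 ▸ (by positivity : (0:ℝ) ≤ v/2), ha'v ▸ (by linarith)⟩)
        obtain ⟨b₀, hb₀mem, hb₀⟩ := this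
        exact ⟨b₀, hb₀mem, hb₀⟩
      have hB'closed : IsClosed B' :=
        (hcontc.mono (Set.Icc_subset_Icc ha'mem.1 le_rfl)).preimage_isClosed_of_isClosed
          isClosed_Icc isClosed_singleton
      have hB'bdd : BddBelow B' := ⟨a', fun x hx => hx.1.1⟩
      set b : ℝ := sInf B' with hb
      have hbB' : b ∈ B' := hB'closed.csInf_mem hB'ne hB'bdd
      have hbv : h b = v/2 := hbB'.2
      have hbmem : b ∈ Set.Icc a' c := hbB'.1
      have ha'b : a' < b := by
        rcases lt_or_eq_of_le hbmem.1 with hlt' | heq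
        · exact hlt'
        · exfalso; rw [← heq, ha'v] at hbv; linarith
      -- on [a', b], v/2 ≤ h ≤ v
      have hlow : ∀ t ∈ Set.Icc a' b, v/2 ≤ h t := by
        intro t htmem
        by_contra hle
        push_neg at hle
        have htb : t < b := by
          rcases lt_or_eq_of_le htmem.2 with hlt' | heq
          · exact hlt'
          · exfalso; rw [heq, hbv] at hle; linarith
        have := intermediate_value_Icc' htmem.1
          (hcontc.mono (Set.Icc_subset_Icc ha'mem.1 (le_trans htmem.2 hbmem.2)))
          (Set.mem_Icc.mpr ⟨hle.le, ha'v ▸ (by linarith)⟩)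
        obtain ⟨t'', ht''mem, ht''v⟩ := this
        have : b ≤ t'' := csInf_le hB'bdd
          ⟨⟨ht''mem.1, le_trans ht''mem.2 (le_trans htmem.2 hbmem.2)⟩, ht''v⟩
        linarith [ht''mem.2]
      have hhigh : ∀ t ∈ Set.Icc a' b, h t ≤ v := by
        intro t htmem
        rcases lt_or_eq_of_le htmem.1 with hlt' | heq
        · exact (hbelow t hlt' (le_trans htmem.2 hbmem.2)).le
        · rw [← heq, ha'v]
      -- v ≤ M
      have hvM : v ≤ M := hav ▸ hMax a (hsubT haIcc)
      -- integral estimate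
      have ha'T : a' ∈ Set.Icc 0 T := hsubT ha'mem
      have hbT : b ∈ Set.Icc 0 T := hsubT ⟨le_trans ha'mem.1 hbmem.1, hbmem.2⟩
      have hsubab : Set.Icc a' b ⊆ Set.Icc 0 T :=
        Set.Icc_subset_Icc ha'T.1 hbT.2
      have hintab : IntervalIntegrable h' volume a' b :=
        hint.mono_set (by rw [hIcc, Set.uIcc_of_le ha'b.le]; exact hsubab)
      have hconstint : IntervalIntegrable (fun _ => -(K*v)) volume a' b :=
        intervalIntegrable_const
      have hae : (fun _ => -(K*v)) ≤ᵐ[volume.restrict (Set.Icc a' b)] h' := by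
        have h1 : ∀ᵐ t ∂(volume.restrict (Set.Icc a' b)),
            t ∈ Set.Icc 0 T → -α (h t) ≤ h' t := ae_restrict_of_ae hineq
        have h2 : ∀ᵐ t ∂(volume.restrict (Set.Icc a' b)), t ∈ Set.Icc a' b :=
          ae_restrict_mem measurableSet_Icc
        filter_upwards [h1, h2] with t h1t h2t
        have hht : h t ∈ Set.Icc (0:ℝ) M :=
          ⟨le_trans (by positivity) (hlow t h2t), le_trans (hhigh t h2t) hvM⟩
        have hαb : α (h t) ≤ K * v := le_trans (hKbound _ hht)
          (mul_le_mul_of_nonneg_left (hhigh t h2t) hKpos.le)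
        have := h1t (hsubab h2t)
        linarith
      have hIb : -(K*v) * (b - a') ≤ h b - h a' := by
        rw [hdiff a' b ha'T hbT]
        calc -(K*v) * (b - a') = ∫ _ in a'..b, -(K*v) := by
              rw [intervalIntegral.integral_const, smul_eq_mul]; ring
          _ ≤ ∫ s in a'..b, h' s :=
              intervalIntegral.integral_mono_ae_restrict ha'b.le hconstint hintab hae
      -- deduce the gap
      have hgap : 1/(2*K) ≤ b - a' := by
        rw [hbv, ha'v] at hIb
        have h1 : v/2 ≤ K * v * (b - a') := by nlinarith
        rw [div_le_iff₀ (by positivity)]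
        nlinarith
      refine ⟨b, ⟨le_trans ha'mem.1 hbmem.1, hbmem.2⟩, ?_, ?_⟩
      · rw [hbv, hv]; ring
      · have haa' : a ≤ a' := ha'A.1.1
        push_cast
        have : (n : ℝ) / (2*K) + 1/(2*K) = ((n:ℝ)+1)/(2*K) := by ring
        linarith [this ▸ (by linarith : (n:ℝ)/(2*K) + 1/(2*K) ≤ b)]
      -- (end of induction step)
  -- final contradiction
  obtain ⟨n, hn⟩ := exists_nat_gt (2*K*T)
  obtain ⟨a, haIcc, _, han⟩ := key n
  have h1 : (n : ℝ) / (2*K) > T := by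
    rw [gt_iff_lt, lt_div_iff₀ (by positivity)]
    linarith [hn]
  linarith [haIcc.2, hcmem.2, han]
end

section
/- Lower bound propagation for safety: let h : [0,T] → ℝ be absolutely continuous, L : [0,T] → ℝ be measurable with h'(t) ≥ L(t) for almost all t, and α be a locally Lipschitz class-K function. If L(t) ≥ -α(h(t)) for almost all t ∈ [0,T] and h(0) > 0, then h(t) > 0 for all t ∈ [0,T]. -/
open MeasureTheory intervalIntegral Set Filter Topology



lemma gronwall_pos {a b K : ℝ} (hab : a ≤ b) (hK : 0 ≤ K) (h h' : ℝ → ℝ)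
    (hcont : ContinuousOn h (Icc a b))
    (hint : IntervalIntegrable h' volume a b)
    (hftc : ∀ x ∈ Icc a b, ∀ z ∈ Icc a b, x ≤ z → h z - h x = ∫ s in x..z, h' s)
    (hae : ∀ᵐ t, t ∈ Ioc a b → -K * h t ≤ h' t) :
    Real.exp (K * a) * h a ≤ Real.exp (K * b) * h b := by
  set f : ℝ → ℝ := fun t => -(Real.exp (K * t) * h t) with hf_def
  have hfc : ContinuousOn f (Icc a b) := by
    apply ContinuousOn.neg
    exact (Real.continuous_exp.comp (continuous_const.mul continuous_id)).continuousOn.mul hcont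
  have key : ∀ x ∈ Icc a b, f x ≤ f a := by
    apply image_le_of_liminf_slope_right_le_deriv_boundary (B := fun _ => f a)
      (B' := fun _ => 0) hfc le_rfl continuousOn_const
    · intro x hx; exact hasDerivWithinAt_const x _ (f a)
    · intro x hx r hr
      apply Filter.Eventually.frequently
      set ε : ℝ := r / (2 * (K * Real.exp (K * b) + 1)) with hε_def
      have hexpb : 0 < Real.exp (K * b) := Real.exp_pos _
      have hden : 0 < K * Real.exp (K * b) + 1 := by positivity
      have hε : 0 < ε := by positivity
      have hcx : ContinuousWithinAt h (Icc a b) x := hcont x ⟨hx.1, le_of_lt hx.2⟩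
      have hev : ∀ᶠ s in 𝓝[Icc a b] x, h s < h x + ε :=
        hcx (Iio_mem_nhds (by linarith))
      obtain ⟨δ', hδ', hball⟩ := Metric.mem_nhdsWithin_iff.mp hev
      set z₁ : ℝ := min (x + δ' / 2) b with hz₁_def
      have hxz₁ : x < z₁ := lt_min (by linarith) hx.2
      have hbnd : ∀ z ∈ Ioc x z₁, ∀ s ∈ Icc x z, h s ≤ h x + ε := by
        intro z hz s hs
        have hsb : s ∈ Metric.ball x δ' := by
          rw [Metric.mem_ball, Real.dist_eq, abs_of_nonneg (by linarith [hs.1])]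
          have : z ≤ x + δ' / 2 := hz.2.trans (min_le_left _ _)
          linarith [hs.2]
        have hsI : s ∈ Icc a b := ⟨hx.1.trans hs.1, hs.2.trans (hz.2.trans (min_le_right _ _))⟩
        exact le_of_lt (hball ⟨hsb, hsI⟩)
      set φ : ℝ → ℝ := fun z => Real.exp (K * z) * K * (h x + ε)
          - h x * slope (fun t => Real.exp (K * t)) x z with hφ_def
      have hφlim : Filter.Tendsto φ (𝓝[>] x) (𝓝 (K * Real.exp (K * x) * ε)) := by
        have h1 : Filter.Tendsto (fun z => Real.exp (K * z) * K * (h x + ε)) (𝓝[>] x)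
            (𝓝 (Real.exp (K * x) * K * (h x + ε))) := by
          apply Filter.Tendsto.mono_left _ nhdsWithin_le_nhds
          exact (((Real.continuous_exp.comp (continuous_const.mul continuous_id)).mul
            continuous_const).mul continuous_const).tendsto x
        have h2 : Filter.Tendsto (fun z => slope (fun t => Real.exp (K * t)) x z) (𝓝[>] x)
            (𝓝 (K * Real.exp (K * x))) := by
          have hd : HasDerivAt (fun t => Real.exp (K * t)) (K * Real.exp (K * x)) x := by
            simpa [mul_comm, Function.comp_def] using (Real.hasDerivAt_exp (K * x)).comp x
              ((hasDerivAt_id x).const_mul K)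
          exact (hasDerivAt_iff_tendsto_slope.mp hd).mono_left
            (nhdsWithin_mono x (fun y hy => ne_of_gt hy))
        have h3 := h1.sub (h2.const_mul (h x))
        convert h3 using 1
        ring_nf
      have hlim_lt : K * Real.exp (K * x) * ε < r := by
        have hx_le : Real.exp (K * x) ≤ Real.exp (K * b) :=
          Real.exp_le_exp.mpr (mul_le_mul_of_nonneg_left hx.2.le hK)
        have h1 : K * Real.exp (K * x) * ε ≤ (K * Real.exp (K * b) + 1) * ε := by
          apply mul_le_mul_of_nonneg_right _ hε.le
          nlinarith
        have h2 : (K * Real.exp (K * b) + 1) * ε = r / 2 := by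
          rw [hε_def]; field_simp
        linarith
      have hφr : ∀ᶠ z in 𝓝[>] x, φ z < r := hφlim.eventually_lt_const hlim_lt
      have hmem : Ioc x z₁ ∈ 𝓝[>] x := Ioc_mem_nhdsGT hxz₁
      filter_upwards [hφr, hmem] with z hφz hz
      refine lt_of_le_of_lt ?_ hφz
      have hzx : 0 < z - x := by linarith [hz.1]
      have hzI : z ∈ Icc a b := ⟨hx.1.trans (le_of_lt hz.1), hz.2.trans (min_le_right _ _)⟩
      have hxI : x ∈ Icc a b := ⟨hx.1, hx.2.le⟩
      have hint_sub : IntervalIntegrable h' volume x z := by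
        apply hint.mono_set
        rw [uIcc_of_le (le_of_lt hz.1), uIcc_of_le hab]
        exact Icc_subset_Icc hx.1 hzI.2
      have hh_int : IntervalIntegrable h volume x z := by
        apply ContinuousOn.intervalIntegrable
        apply hcont.mono
        rw [uIcc_of_le (le_of_lt hz.1)]
        exact Icc_subset_Icc hx.1 hzI.2
      have hKh_int : IntervalIntegrable (fun t => -K * h t) volume x z := hh_int.const_mul _
      have step1 : h z - h x = ∫ s in x..z, h' s := hftc x hxI z hzI (le_of_lt hz.1)
      have step2 : (∫ s in x..z, (-K) * h s) ≤ ∫ s in x..z, h' s := by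
        apply intervalIntegral.integral_mono_ae_restrict (le_of_lt hz.1) hKh_int hint_sub
        have h0 : ∀ᵐ t ∂(volume.restrict (Icc x z)), t ∈ Ioc a b → -K * h t ≤ h' t :=
          ae_restrict_of_ae hae
        have h1 : ∀ᵐ t ∂(volume.restrict (Icc x z)), t ∈ Icc x z :=
          ae_restrict_mem measurableSet_Icc
        have h2 : ∀ᵐ t ∂(volume.restrict (Icc x z)), t ≠ x := by
          refine ae_restrict_of_ae ?_
          rw [ae_iff]
          simpa using Real.volume_singleton
        filter_upwards [h0, h1, h2] with t h0t h1t h2t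
        exact h0t ⟨hx.1.trans_lt (h1t.1.lt_of_ne (Ne.symm h2t)), h1t.2.trans hzI.2⟩
      have step3 : (∫ s in x..z, h s) ≤ (z - x) * (h x + ε) := by
        have h4 := intervalIntegral.integral_mono_on (le_of_lt hz.1) hh_int
          intervalIntegrable_const (hbnd z hz)
        rwa [intervalIntegral.integral_const, smul_eq_mul] at h4
      have hint_eval : (∫ s in x..z, (-K) * h s) = -K * ∫ s in x..z, h s :=
        intervalIntegral.integral_const_mul _ _
      have hlow : -K * ((z - x) * (h x + ε)) ≤ h z - h x := by
        rw [step1]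
        refine le_trans ?_ step2
        rw [hint_eval]
        exact mul_le_mul_of_nonpos_left step3 (neg_nonpos.mpr hK)
      have hmain : h x - h z ≤ K * ((z - x) * (h x + ε)) := by linarith
      have hexp : 0 < Real.exp (K * z) := Real.exp_pos _
      rw [slope_def_field, div_le_iff₀ hzx]
      simp only [hφ_def, hf_def, slope_def_field]
      field_simp
      nlinarith [mul_le_mul_of_nonneg_left hmain hexp.le]
  have := key b ⟨hab, le_rfl⟩
  simp only [hf_def, neg_le_neg_iff] at this
  linarith


/-- lower bound propagation for safety. If a measurable L lower
bounds h' a.e. and satisfies the conservative NCBF constraint L ≥ -α(h) a.e.,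
then h stays positive. -/
theorem stmt_10 (T : ℝ) (hT : 0 ≤ T) (h h' L : ℝ → ℝ) (α : ℝ → ℝ)
    (hint : IntervalIntegrable h' volume 0 T)
    (hftc : ∀ t ∈ Set.Icc 0 T, h t = h 0 + ∫ s in (0:ℝ)..t, h' s)
    (hLmeas : Measurable L)
    (hαlip : LocallyLipschitz α) (hαmono : StrictMono α) (hα0 : α 0 = 0)
    (hlb : ∀ᵐ t, t ∈ Set.Icc 0 T → L t ≤ h' t)
    (hineq : ∀ᵐ t, t ∈ Set.Icc 0 T → -α (h t) ≤ L t)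
    (h0 : 0 < h 0) :
    ∀ t ∈ Set.Icc 0 T, 0 < h t := by
  have hIcc : Set.uIcc (0:ℝ) T = Set.Icc 0 T := Set.uIcc_of_le hT
  -- continuity of h on [0, T]
  have hcont : ContinuousOn h (Set.Icc 0 T) := by
    have h1 : IntegrableOn h' (Set.uIcc 0 T) := by
      rw [hIcc]
      exact (intervalIntegrable_iff_integrableOn_Icc_of_le hT).mp hint
    have h2 : ContinuousOn (fun t => h 0 + ∫ s in (0:ℝ)..t, h' s) (Set.Icc 0 T) := by
      rw [← hIcc]
      exact continuousOn_const.add (intervalIntegral.continuousOn_primitive_interval h1)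
    exact h2.congr hftc
  -- combined a.e. inequality
  have hkey : ∀ᵐ t, t ∈ Set.Icc 0 T → -α (h t) ≤ h' t := by
    filter_upwards [hlb, hineq] with t h1 h2 ht
    exact (h2 ht).trans (h1 ht)
  by_contra hcon
  push_neg at hcon
  obtain ⟨w, hw, hw0⟩ := hcon
  -- first nonpositive time t₀
  set S : Set ℝ := Set.Icc 0 T ∩ h ⁻¹' Set.Iic 0 with hS_def
  have hSw : w ∈ S := ⟨hw, hw0⟩
  have hSclosed : IsClosed S := hcont.preimage_isClosed_of_isClosed isClosed_Icc isClosed_Iic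
  have hSbdd : BddBelow S := ⟨0, fun t ht => ht.1.1⟩
  set t₀ : ℝ := sInf S with ht₀_def
  have ht₀S : t₀ ∈ S := hSclosed.csInf_mem ⟨w, hSw⟩ hSbdd
  have ht₀T : t₀ ∈ Set.Icc 0 T := ht₀S.1
  have ht₀le : h t₀ ≤ 0 := ht₀S.2
  have ht₀pos : 0 < t₀ := by
    rcases lt_or_eq_of_le ht₀T.1 with h1 | h1
    · exact h1
    · exfalso; rw [← h1] at ht₀le; linarith
  have hpos : ∀ t, 0 ≤ t → t < t₀ → 0 < h t := by
    intro t ht1 ht2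
    by_contra hc
    push_neg at hc
    have : t ∈ S := ⟨⟨ht1, le_trans ht2.le ht₀T.2⟩, hc⟩
    exact absurd (csInf_le hSbdd this) (not_le.mpr ht2)
  -- h t₀ = 0
  have ht₀0 : h t₀ = 0 := by
    refine le_antisymm ht₀le ?_
    have hsub : Set.Ico 0 t₀ ⊆ Set.Icc 0 T := fun t ht => ⟨ht.1, ht.2.le.trans ht₀T.2⟩
    have htd : Filter.Tendsto h (𝓝[Set.Ico 0 t₀] t₀) (𝓝 (h t₀)) :=
      ((hcont t₀ ht₀T).mono hsub)
    have hne : (𝓝[Set.Ico 0 t₀] t₀).NeBot := by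
      rw [← mem_closure_iff_nhdsWithin_neBot, closure_Ico (ht₀pos.ne : (0:ℝ) ≠ t₀)]
      exact ⟨ht₀pos.le, le_rfl⟩
    refine ge_of_tendsto htd ?_
    filter_upwards [eventually_mem_nhdsWithin] with t ht
    exact (hpos t ht.1 ht.2).le
  -- Lipschitz constant near 0
  obtain ⟨K, s, hs, hKlip⟩ := hαlip 0
  obtain ⟨δ₀, hδ₀pos, hball⟩ := Metric.mem_nhds_iff.mp hs
  set δ : ℝ := min (δ₀ / 2) (h 0) with hδ_def
  have hδpos : 0 < δ := lt_min (by linarith) h0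
  have h0s : (0:ℝ) ∈ s := hball (Metric.mem_ball_self hδ₀pos)
  have hαbound : ∀ y, 0 ≤ y → y ≤ δ → α y ≤ (K:ℝ) * y := by
    intro y hy1 hy2
    have hys : y ∈ s := by
      apply hball
      rw [Metric.mem_ball, Real.dist_eq, sub_zero, abs_of_nonneg hy1]
      have : δ ≤ δ₀ / 2 := min_le_left _ _
      linarith
    have := hKlip.dist_le_mul y hys 0 h0s
    rw [Real.dist_eq, Real.dist_eq, hα0, sub_zero, sub_zero, abs_of_nonneg hy1] at this
    exact (le_abs_self _).trans this
  -- last time h ≥ δ before t₀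
  set S₁ : Set ℝ := Set.Icc 0 t₀ ∩ h ⁻¹' Set.Ici δ with hS₁_def
  have hsub₁ : Set.Icc 0 t₀ ⊆ Set.Icc 0 T := Set.Icc_subset_Icc le_rfl ht₀T.2
  have hS₁closed : IsClosed S₁ :=
    (hcont.mono hsub₁).preimage_isClosed_of_isClosed isClosed_Icc isClosed_Ici
  have h0S₁ : (0:ℝ) ∈ S₁ := ⟨⟨le_rfl, ht₀pos.le⟩, (min_le_right (δ₀ / 2) (h 0) : δ ≤ h 0)⟩
  have hS₁bdd : BddAbove S₁ := ⟨t₀, fun t ht => ht.1.2⟩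
  set t₁ : ℝ := sSup S₁ with ht₁_def
  have ht₁S₁ : t₁ ∈ S₁ := hS₁closed.csSup_mem ⟨0, h0S₁⟩ hS₁bdd
  have ht₁δ : δ ≤ h t₁ := ht₁S₁.2
  have ht₁I : t₁ ∈ Set.Icc 0 t₀ := ht₁S₁.1
  have ht₁lt : t₁ < t₀ := by
    rcases lt_or_eq_of_le ht₁I.2 with h1 | h1
    · exact h1
    · exfalso; rw [h1, ht₀0] at ht₁δ; linarith
  have hsmall : ∀ t ∈ Set.Ioc t₁ t₀, h t < δ := by
    intro t ht
    by_contra hc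
    push_neg at hc
    have : t ∈ S₁ := ⟨⟨ht₁I.1.trans ht.1.le, ht.2⟩, hc⟩
    exact absurd (le_csSup hS₁bdd this) (not_le.mpr ht.1)
  have hnonneg : ∀ t ∈ Set.Ioc t₁ t₀, 0 ≤ h t := by
    intro t ht
    rcases lt_or_eq_of_le ht.2 with h1 | h1
    · exact (hpos t (ht₁I.1.trans ht.1.le) h1).le
    · rw [h1, ht₀0]
  -- a.e. inequality with linear bound on (t₁, t₀]
  have hae : ∀ᵐ t, t ∈ Set.Ioc t₁ t₀ → -(K:ℝ) * h t ≤ h' t := by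
    filter_upwards [hkey] with t hkt ht
    have htT : t ∈ Set.Icc 0 T := ⟨ht₁I.1.trans ht.1.le, ht.2.trans ht₀T.2⟩
    have h1 := hkt htT
    have h2 : α (h t) ≤ (K:ℝ) * h t :=
      hαbound (h t) (hnonneg t ht) (hsmall t ht).le
    linarith
  -- FTC on subintervals
  have hftc2 : ∀ x ∈ Set.Icc t₁ t₀, ∀ z ∈ Set.Icc t₁ t₀, x ≤ z →
      h z - h x = ∫ s in x..z, h' s := by
    intro x hx z hz hxz
    have hxT : x ∈ Set.Icc 0 T := ⟨ht₁I.1.trans hx.1, hx.2.trans ht₀T.2⟩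
    have hzT : z ∈ Set.Icc 0 T := ⟨ht₁I.1.trans hz.1, hz.2.trans ht₀T.2⟩
    have hix : IntervalIntegrable h' volume 0 x := by
      apply hint.mono_set
      rw [Set.uIcc_of_le hxT.1, hIcc]
      exact Set.Icc_subset_Icc le_rfl hxT.2
    have hiz : IntervalIntegrable h' volume 0 z := by
      apply hint.mono_set
      rw [Set.uIcc_of_le hzT.1, hIcc]
      exact Set.Icc_subset_Icc le_rfl hzT.2
    rw [hftc x hxT, hftc z hzT]
    rw [← intervalIntegral.integral_interval_sub_left hiz hix]
    ring
  -- apply Gronwall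
  have hgron := gronwall_pos ht₁lt.le K.coe_nonneg h h'
    (hcont.mono (Set.Icc_subset_Icc (ht₁I.1) ht₀T.2))
    (by
      apply hint.mono_set
      rw [Set.uIcc_of_le ht₁lt.le, hIcc]
      exact Set.Icc_subset_Icc ht₁I.1 ht₀T.2)
    hftc2 hae
  rw [ht₀0] at hgron
  have hht₁ : 0 < h t₁ := lt_of_lt_of_le hδpos ht₁δ
  have h1 : 0 < Real.exp ((K:ℝ) * t₁) * h t₁ := by positivity
  simp at hgron
  nlinarith [Real.exp_pos ((K:ℝ) * t₁)]
end
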